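/- There exist constants R₀, k₀ > 0 such that the function V₋(x) = log(|x|² + k₀) − R₀ satisfies (L V₋)(x) ≥ 0 for every x ∈ ℝ² (i.e., −L V₋ ≤ 0 in ℝ²) and V₋(x) ≤ 0 for every x ∈ H. -/

import Mathlib

/-!
Take `g y = log (‖y‖² + k)` with `k = d²`. With `ρ` the rotation by a right angle,
`⟪x, z⟫² + ⟪x, ρ z⟫² = ‖x‖² ‖z‖²`, and an elementary estimate gives
`4 g x ≤ g (x - z) + g (x + z) + g (x - ρ z) + g (x + ρ z)` whenever `‖z‖² ≤ 2k`, in particular on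
the support of `J`. Averaging against the radial kernel `J`, which is invariant under `z ↦ -z` and
`ρ`, yields `g x ≤ (J * g) x`, i.e. `L g ≥ 0`; the constant `R₀ = log (R² + k) + 1` then makes
`g - R₀ ≤ 0` on `H ⊆ B_R(0)` without changing `L`.
-/

open MeasureTheory Real Filter

abbrev E2 := EuclideanSpace ℝ (Fin 2)

/-- The nonlocal operator `L g = J * g - g`. -/
noncomputable def nonlocalOp (J g : E2 → ℝ) (x : E2) : ℝ :=
  (∫ y : E2, J (x - y) * g y) - g x

lemma pow_four_le_of_sq_add_sq_eq {C k r s t : ℝ} (hr : 0 ≤ r) (hrk : r ≤ 2 * k)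
    (hst : s ^ 2 + t ^ 2 = (C - k) * r) :
    C ^ 4 ≤ (C + r - 2 * s) * (C + r + 2 * s) * ((C + r - 2 * t) * (C + r + 2 * t)) := by
  have hprod : (C ^ 2 - r ^ 2) ^ 2 + 4 * k * r * (C + r) ^ 2 ≤
      (C + r - 2 * s) * (C + r + 2 * s) * ((C + r - 2 * t) * (C + r + 2 * t)) := by
    have : (C + r - 2 * s) * (C + r + 2 * s) * ((C + r - 2 * t) * (C + r + 2 * t)) =
        (C ^ 2 - r ^ 2) ^ 2 + 4 * k * r * (C + r) ^ 2 + 16 * (s * t) ^ 2 := by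
      linear_combination (-4 * (C + r) ^ 2) * hst
    nlinarith [sq_nonneg (s * t)]
  have hkr : 0 ≤ k * r := mul_nonneg (by linarith) hr
  -- `hst` forces `k ≤ C` unless `r = 0`, so `(C² - r²)² + 4 k r (C + r)² ≥ C⁴ + 2 C² r (2 k - r)`
  nlinarith [mul_le_mul_of_nonneg_left (by nlinarith : C ^ 2 ≤ (C + r) ^ 2) hkr,
    mul_nonneg (mul_nonneg hr (sq_nonneg C)) (by linarith : 0 ≤ 2 * k - r)]

section Plane

variable {E : Type*} [NormedAddCommGroup E] [InnerProductSpace ℝ E]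
  [Fact (Module.finrank ℝ E = 2)]

lemma Orientation.four_mul_log_sq_norm_add_le (o : Orientation ℝ E (Fin 2)) {k : ℝ} (hk : 0 < k)
    (x : E) {z : E} (hz : ‖z‖ ^ 2 ≤ 2 * k) :
    4 * log (‖x‖ ^ 2 + k) ≤
      log (‖x - z‖ ^ 2 + k) + log (‖x + z‖ ^ 2 + k) +
        (log (‖x - o.rightAngleRotation z‖ ^ 2 + k) +
          log (‖x + o.rightAngleRotation z‖ ^ 2 + k)) := by
  set C := ‖x‖ ^ 2 + k
  set r := ‖z‖ ^ 2
  set s := inner ℝ x z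
  set t := inner ℝ x (o.rightAngleRotation z)
  have hρ : ‖o.rightAngleRotation z‖ = ‖z‖ := o.rightAngleRotation.norm_map z
  have e₁ : ‖x - z‖ ^ 2 + k = C + r - 2 * s := by rw [norm_sub_sq_real]; ring
  have e₂ : ‖x + z‖ ^ 2 + k = C + r + 2 * s := by rw [norm_add_sq_real]; ring
  have e₃ : ‖x - o.rightAngleRotation z‖ ^ 2 + k = C + r - 2 * t := by
    rw [norm_sub_sq_real, hρ]; ring
  have e₄ : ‖x + o.rightAngleRotation z‖ ^ 2 + k = C + r + 2 * t := by
    rw [norm_add_sq_real, hρ]; ring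
  have hst : s ^ 2 + t ^ 2 = (C - k) * r := by
    simp only [s, t, C, r]
    rw [o.inner_rightAngleRotation_right, neg_sq, o.inner_sq_add_areaForm_sq]; ring
  have hprod := pow_four_le_of_sq_add_sq_eq (sq_nonneg _) hz hst
  have hpos : ∀ y : E, 0 < ‖y‖ ^ 2 + k := fun y => by positivity
  rw [← e₁, ← e₂, ← e₃, ← e₄] at hprod
  rw [← log_mul (hpos _).ne' (hpos _).ne', ← log_mul (hpos _).ne' (hpos _).ne',
    ← log_mul (by positivity) (by positivity)]
  calc 4 * log C = log (C ^ 4) := by rw [log_pow]; norm_num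
    _ ≤ _ := log_le_log (by positivity) hprod

end Plane

section Averaging

variable {E : Type*} [NormedAddCommGroup E] [InnerProductSpace ℝ E] [FiniteDimensional ℝ E]
  [MeasurableSpace E] [BorelSpace E] {J g : E → ℝ}

lemma integral_mul_comp_linearIsometryEquiv (hJ : ∀ x y : E, ‖x‖ = ‖y‖ → J x = J y)
    (S : E ≃ₗᵢ[ℝ] E) (h : E → ℝ) :
    ∫ z, J z * h (S z) = ∫ z, J z * h z :=
  calc ∫ z, J z * h (S z) = ∫ z, J (S z) * h (S z) := by
        simp only [hJ (S _) _ (S.norm_map _)]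
    _ = ∫ z, J z * h z :=
        S.measurePreserving.integral_comp S.toHomeomorph.measurableEmbedding fun z => J z * h z

lemma le_integral_mul_comp_sub_of_four_point (T : E ≃ₗᵢ[ℝ] E) (hJc : Continuous J)
    (hJs : HasCompactSupport J) (hJ : ∀ x y : E, ‖x‖ = ‖y‖ → J x = J y) (hJnn : 0 ≤ J)
    (hJint : ∫ z, J z = 1) (hg : Continuous g) (x : E)
    (hfour : ∀ z, J z ≠ 0 → 4 * g x ≤ g (x - z) + g (x + z) + (g (x - T z) + g (x + T z))) :
    g x ≤ ∫ z, J z * g (x - z) := by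
  set f : (E ≃ₗᵢ[ℝ] E) → E → ℝ := fun S z => J z * g (x - S z)
  have hint : ∀ S, Integrable (f S) := fun S =>
    (hJc.mul (hg.comp (continuous_const.sub S.continuous))).integrable_of_hasCompactSupport
      hJs.mul_right
  have hsym : ∀ S, ∫ z, f S z = ∫ z, J z * g (x - z) := fun S =>
    integral_mul_comp_linearIsometryEquiv hJ S fun z => g (x - z)
  set n := LinearIsometryEquiv.neg ℝ (E := E)
  have hpoint : ∀ z, J z * (4 * g x) ≤
      f (.refl ℝ E) z + f n z + (f T z + f (T.trans n) z) := by
    intro z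
    by_cases hz : J z = 0
    · simp only [f, hz, zero_mul, add_zero, le_refl]
    · simpa [f, n, mul_add, sub_neg_eq_add] using
        mul_le_mul_of_nonneg_left (hfour z hz) (hJnn z)
  have hmono :
      ∫ z, J z * (4 * g x) ≤ ∫ z, (f (.refl ℝ E) z + f n z + (f T z + f (T.trans n) z)) :=
    integral_mono ((integrable_of_integral_eq_one hJint).mul_const _)
      (((hint _).add (hint _)).add ((hint _).add (hint _))) hpoint
  rw [integral_mul_const, hJint,
    integral_add (by exact (hint _).add (hint _)) (by exact (hint _).add (hint _)),
    integral_add (hint _) (hint _), integral_add (hint _) (hint _), hsym, hsym, hsym, hsym] at hmono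
  linarith

end Averaging

lemma nonlocalOp_eq_integral_mul_comp_sub (J g : E2 → ℝ) (x : E2) :
    nonlocalOp J g x = (∫ z, J z * g (x - z)) - g x := by
  rw [nonlocalOp, ← integral_sub_left_eq_self (fun z => J z * g (x - z)) volume x]
  simp only [sub_sub_cancel]

lemma nonlocalOp_sub_const {J g : E2 → ℝ} (hJ : ∫ z, J z = 1) {x : E2}
    (hg : Integrable fun z => J z * g (x - z)) (c : ℝ) :
    nonlocalOp J (fun y => g y - c) x = nonlocalOp J g x := by
  simp only [nonlocalOp_eq_integral_mul_comp_sub, mul_sub]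
  rw [integral_sub hg ((integrable_of_integral_eq_one hJ).mul_const c), integral_mul_const, hJ]
  ring

theorem stmt5_general
    (J : E2 → ℝ) (d : ℝ) (hd : 0 < d)
    (hJC2 : ContDiff ℝ 2 J)
    (hJsupp : HasCompactSupport J)
    (hJrad : ∀ x y : E2, ‖x‖ = ‖y‖ → J x = J y)
    (hJpos : ∀ x : E2, ‖x‖ < d → 0 < J x)
    (hJzero : ∀ x : E2, d ≤ ‖x‖ → J x = 0)
    (hJint : (∫ x : E2, J x) = 1)
    (H : Set E2) (R : ℝ) (hR2 : 2 < R)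
    (hHR : H ⊆ Metric.ball (0 : E2) R) :
    ∃ R₀ > (0:ℝ), ∃ k₀ > (0:ℝ),
      (∀ x : E2, 0 ≤ nonlocalOp J (fun y => Real.log (‖y‖ ^ 2 + k₀) - R₀) x) ∧
      (∀ x ∈ H, Real.log (‖x‖ ^ 2 + k₀) - R₀ ≤ 0) := by
  have : Fact (Module.finrank ℝ E2 = 2) := ⟨finrank_euclideanSpace_fin⟩
  let o : Orientation ℝ E2 (Fin 2) := (EuclideanSpace.basisFun (Fin 2) ℝ).toBasis.orientation
  set k := d ^ 2
  have hk : 0 < k := by positivity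
  set g : E2 → ℝ := fun y => log (‖y‖ ^ 2 + k)
  have hg : Continuous g := (by fun_prop : Continuous fun y : E2 => ‖y‖ ^ 2 + k).log
    fun y => by positivity
  have hJnn : 0 ≤ J := fun z =>
    (lt_or_ge ‖z‖ d).elim (fun h => (hJpos z h).le) (fun h => (hJzero z h).ge)
  have hmean (x : E2) : g x ≤ ∫ z, J z * g (x - z) :=
    le_integral_mul_comp_sub_of_four_point o.rightAngleRotation hJC2.continuous hJsupp hJrad
      hJnn hJint hg x fun z hz => by
        have hzd : ‖z‖ < d := not_le.1 (mt (hJzero z) hz)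
        refine o.four_mul_log_sq_norm_add_le hk x ?_
        nlinarith [norm_nonneg z]
  refine ⟨log (R ^ 2 + k) + 1, ?_, k, hk, fun x => ?_, fun x hx => ?_⟩
  · linarith [log_pos (by nlinarith : 1 < R ^ 2 + k)]
  · have hint : Integrable fun z => J z * g (x - z) :=
      (hJC2.continuous.mul (hg.comp (continuous_const.sub continuous_id))
        ).integrable_of_hasCompactSupport hJsupp.mul_right
    rw [nonlocalOp_sub_const hJint hint, nonlocalOp_eq_integral_mul_comp_sub]
    linarith [hmean x]
  · have hxR : ‖x‖ < R := mem_ball_zero_iff.1 (hHR hx)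
    have hxk : ‖x‖ ^ 2 + k ≤ R ^ 2 + k := by nlinarith [norm_nonneg x]
    linarith [log_le_log (by positivity) hxk]

theorem stmt5
    (J : E2 → ℝ) (d : ℝ) (hd : 0 < d)
    (hJC2 : ContDiff ℝ 2 J)
    (hJsupp : HasCompactSupport J)
    (hJrad : ∀ x y : E2, ‖x‖ = ‖y‖ → J x = J y)
    (hJpos : ∀ x : E2, ‖x‖ < d → 0 < J x)
    (hJzero : ∀ x : E2, d ≤ ‖x‖ → J x = 0)
    (hJint : (∫ x : E2, J x) = 1)
    (H : Set E2) (R : ℝ) (hR2 : 2 < R)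
    (hHopen : IsOpen H)
    (hH2 : Metric.ball (0 : E2) 2 ⊆ H)
    (hHR : H ⊆ Metric.ball (0 : E2) R) :
    ∃ R₀ > (0:ℝ), ∃ k₀ > (0:ℝ),
      (∀ x : E2, 0 ≤ nonlocalOp J (fun y => Real.log (‖y‖ ^ 2 + k₀) - R₀) x) ∧
      (∀ x ∈ H, Real.log (‖x‖ ^ 2 + k₀) - R₀ ≤ 0) :=
  stmt5_general J d hd hJC2 hJsupp hJrad hJpos hJzero hJint H R hR2 hHR
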